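/- For a log-normal random variable X with parameters μ ∈ ℝ, σ > 0, and Z a standard normal random variable, P(|X - E[X]| ≤ √Var(X)) > P(|Z| ≤ 1), and the infimum over all μ, σ of the left-hand side equals P(|Z| ≤ 1). -/

import Mathlib

open Real MeasureTheory ProbabilityTheory Set

/-- `P(|X - E[X]| ≤ √Var(X))` for `X = exp (μ + σ Z)` log-normal. -/
noncomputable def lognormalVarProb (μ σ : ℝ) : ℝ :=
  ((Measure.map (fun z : ℝ => Real.exp (μ + σ * z)) (gaussianReal 0 1))
    {x : ℝ | |x - Real.exp (μ + σ ^ 2 / 2)| ≤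
      Real.sqrt ((Real.exp (σ ^ 2) - 1) * Real.exp (2 * μ + σ ^ 2))}).toReal

open scoped NNReal ENNReal

private lemma aux_mono {f f' : ℝ → ℝ} (hd : ∀ x, 0 ≤ x → HasDerivAt f (f' x) x)
    (h0 : ∀ x, 0 ≤ x → 0 ≤ f' x) (hf0 : f 0 = 0) {t : ℝ} (ht : 0 ≤ t) : 0 ≤ f t := by
  have hm : MonotoneOn f (Set.Ici (0:ℝ)) := by
    refine monotoneOn_of_hasDerivWithinAt_nonneg (convex_Ici 0)
      (fun x hx => (hd x hx).continuousAt.continuousWithinAt)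
      (fun x hx => (hd x (le_of_lt (by rwa [interior_Ici] at hx))).hasDerivWithinAt) ?_
    intro x hx
    rw [interior_Ici] at hx
    exact h0 x (le_of_lt hx)
  have := hm (Set.self_mem_Ici) (Set.mem_Ici.2 ht) ht
  rwa [hf0] at this

private lemma exp_cubic_lower {t : ℝ} (ht : 0 ≤ t) :
    1 - t + t ^ 2 / 2 - t ^ 3 / 6 ≤ Real.exp (-t) := by
  have hG : ∀ u : ℝ, 0 ≤ u → 0 ≤ -Real.exp (-u) + 1 - u + u ^ 2 / 2 := by
    intro u hu
    refine aux_mono (f := fun x => -Real.exp (-x) + 1 - x + x ^ 2 / 2)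
      (f' := fun x => Real.exp (-x) - 1 + x) (fun x _ => ?_) (fun x hx => ?_) (by norm_num) hu
    · have h1 : HasDerivAt (fun x : ℝ => Real.exp (-x)) (-Real.exp (-x)) x := by
        simpa using ((hasDerivAt_id x).neg.exp)
      have := ((h1.neg.add_const 1).sub (hasDerivAt_id x)).add
        ((hasDerivAt_pow 2 x).div_const 2)
      exact this.congr_deriv (by push_cast; ring)
    · have := Real.add_one_le_exp (-x)
      linarith
  have hF : 0 ≤ Real.exp (-t) - (1 - t + t ^ 2 / 2 - t ^ 3 / 6) := by
    refine aux_mono (f := fun x => Real.exp (-x) - (1 - x + x ^ 2 / 2 - x ^ 3 / 6))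
      (f' := fun x => -Real.exp (-x) + 1 - x + x ^ 2 / 2) (fun x _ => ?_) (fun x hx => hG x hx)
      (by norm_num) ht
    have h1 : HasDerivAt (fun x : ℝ => Real.exp (-x)) (-Real.exp (-x)) x := by
      simpa using ((hasDerivAt_id x).neg.exp)
    have h2 : HasDerivAt (fun x : ℝ => 1 - x + x ^ 2 / 2 - x ^ 3 / 6)
        (-1 + x - x ^ 2 / 2) x := by
      have := (((hasDerivAt_id x).const_sub 1).add ((hasDerivAt_pow 2 x).div_const 2)).sub
        ((hasDerivAt_pow 3 x).div_const 6)
      exact this.congr_deriv (by push_cast; ring)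
    have := h1.sub h2
    exact this.congr_deriv (by ring)
  linarith

private lemma log_quad_lower {x : ℝ} (hx : 0 ≤ x) : x - x ^ 2 / 2 ≤ Real.log (1 + x) := by
  have h : 0 ≤ Real.log (1 + x) - (x - x ^ 2 / 2) := by
    refine aux_mono (f := fun y => Real.log (1 + y) - (y - y ^ 2 / 2))
      (f' := fun y => (1 + y)⁻¹ - 1 + y) (fun y hy => ?_) ?_ (by norm_num) hx
    · have h1 : (0:ℝ) < 1 + y := by linarith
      have hl : HasDerivAt (fun z : ℝ => Real.log (1 + z)) (1 / (1 + y)) y := by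
        simpa using (((hasDerivAt_id y).const_add 1).log (ne_of_gt h1))
      have h2 : HasDerivAt (fun z : ℝ => z - z ^ 2 / 2) (1 - y) y := by
        have := (hasDerivAt_id y).sub ((hasDerivAt_pow 2 y).div_const 2)
        exact this.congr_deriv (by push_cast; ring)
      have := hl.sub h2
      exact this.congr_deriv (by rw [one_div]; ring)
    · intro y hy
      have h1 : (0:ℝ) < 1 + y := by linarith
      have h2 : 1 - y ≤ (1 + y)⁻¹ := by
        rw [inv_eq_one_div, le_div_iff₀ h1]
        nlinarith
      linarith
  linarith

private lemma s_nonneg (σ : ℝ) : 0 ≤ Real.sqrt (Real.exp (σ ^ 2) - 1) := Real.sqrt_nonneg _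

private lemma s_gt {σ : ℝ} (hσ : 0 < σ) : σ < Real.sqrt (Real.exp (σ ^ 2) - 1) := by
  have h1 : σ ^ 2 < Real.exp (σ ^ 2) - 1 := by
    have := Real.add_one_lt_exp (x := σ ^ 2) (by positivity)
    linarith
  calc σ = Real.sqrt (σ ^ 2) := by rw [Real.sqrt_sq hσ.le]
  _ < _ := Real.sqrt_lt_sqrt (by positivity) h1

private lemma exp_le_inv_one_sub {x : ℝ} (hx : x < 1) : Real.exp x ≤ (1 - x)⁻¹ := by
  have h1 := Real.add_one_le_exp (-x)
  have h2 : (0:ℝ) < 1 - x := by linarith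
  rw [inv_eq_one_div, le_div_iff₀ h2]
  have h3 : Real.exp x * (1 - x) ≤ Real.exp x * Real.exp (-x) := by
    have := Real.exp_pos x
    nlinarith
  rwa [← Real.exp_add, add_neg_cancel, Real.exp_zero] at h3

private lemma s_le {σ : ℝ} (hσ : 0 < σ) (hσ4 : σ ≤ 0.4) :
    Real.sqrt (Real.exp (σ ^ 2) - 1) ≤ σ + σ ^ 3 := by
  have hx : σ ^ 2 < 1 := by nlinarith
  have h1 : Real.exp (σ ^ 2) - 1 ≤ (σ + σ ^ 3) ^ 2 := by
    have h2 := exp_le_inv_one_sub hx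
    have h3 : (1 - σ ^ 2)⁻¹ ≤ 1 + σ ^ 2 + 2 * σ ^ 4 := by
      rw [inv_eq_one_div, div_le_iff₀ (by linarith)]
      nlinarith [mul_nonneg (pow_nonneg hσ.le 4) (show (0:ℝ) ≤ 1 - 2 * σ ^ 2 by nlinarith)]
    nlinarith [pow_nonneg hσ.le 6]
  calc Real.sqrt (Real.exp (σ ^ 2) - 1) ≤ Real.sqrt ((σ + σ ^ 3) ^ 2) := Real.sqrt_le_sqrt h1
  _ = σ + σ ^ 3 := Real.sqrt_sq (by positivity)

private lemma I1 {σ : ℝ} (hσ : 0 < σ) :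
    σ < σ ^ 2 / 2 + Real.log (1 + Real.sqrt (Real.exp (σ ^ 2) - 1)) := by
  set s := Real.sqrt (Real.exp (σ ^ 2) - 1) with hs
  have hsσ : σ < s := s_gt hσ
  have h1 : (0:ℝ) < 1 + σ := by linarith
  have h2 : (0:ℝ) < 1 + s := by linarith
  have h3 : Real.log ((1 + σ) / (1 + s)) ≤ (1 + σ) / (1 + s) - 1 :=
    Real.log_le_sub_one_of_pos (div_pos h1 h2)
  rw [Real.log_div h1.ne' h2.ne'] at h3
  have h4 : σ - σ ^ 2 / 2 ≤ Real.log (1 + σ) := log_quad_lower hσ.le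
  have h5 : (1 + σ) / (1 + s) - 1 = -((s - σ) / (1 + s)) := by field_simp; ring
  have h6 : 0 < (s - σ) / (1 + s) := div_pos (by linarith) h2
  rw [h5] at h3
  linarith

private lemma I2 {σ : ℝ} (hσ : 0 < σ) (hs : Real.sqrt (Real.exp (σ ^ 2) - 1) < 1) :
    Real.log (1 - Real.sqrt (Real.exp (σ ^ 2) - 1)) ≤ -σ - σ ^ 2 / 2 := by
  set s := Real.sqrt (Real.exp (σ ^ 2) - 1) with hsdef
  have hsσ : σ < s := s_gt hσ
  have h1 : (0:ℝ) < 1 - s := by linarith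
  -- σ is small : σ ≤ 0.8326
  have hσb : σ ≤ 0.8326 := by
    have h2 : Real.exp (σ ^ 2) - 1 < 1 := by
      have h0 : (0:ℝ) ≤ Real.exp (σ ^ 2) - 1 := by
        have := Real.one_le_exp (sq_nonneg σ); linarith
      have := Real.sq_sqrt h0
      nlinarith [Real.sqrt_nonneg (Real.exp (σ ^ 2) - 1)]
    have h3 : σ ^ 2 < Real.log 2 := by
      have := Real.log_lt_log (Real.exp_pos _) (by linarith : Real.exp (σ ^ 2) < 2)
      rwa [Real.log_exp] at this
    have h4 : σ ^ 2 < 0.6931471808 := h3.trans Real.log_two_lt_d9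
    nlinarith
  rw [Real.log_le_iff_le_exp h1]
  have ht : (0:ℝ) ≤ σ + σ ^ 2 / 2 := by positivity
  have h5 := exp_cubic_lower ht
  have h6 : 1 - s ≤ 1 - σ := by linarith
  have h7 : 1 - σ ≤ 1 - (σ + σ ^ 2 / 2) + (σ + σ ^ 2 / 2) ^ 2 / 2 - (σ + σ ^ 2 / 2) ^ 3 / 6 := by
    have e43 : σ ^ 4 ≤ 0.8326 * σ ^ 3 := by nlinarith [pow_nonneg hσ.le 3]
    have e54 : σ ^ 5 ≤ 0.8326 * σ ^ 4 := by nlinarith [pow_nonneg hσ.le 4]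
    have e65 : σ ^ 6 ≤ 0.8326 * σ ^ 5 := by nlinarith [pow_nonneg hσ.le 5]
    nlinarith [pow_nonneg hσ.le 3, pow_nonneg hσ.le 4, pow_nonneg hσ.le 5]
  calc 1 - s ≤ 1 - (σ + σ ^ 2 / 2) + (σ + σ ^ 2 / 2) ^ 2 / 2 - (σ + σ ^ 2 / 2) ^ 3 / 6 := by linarith
  _ ≤ Real.exp (-(σ + σ ^ 2 / 2)) := h5
  _ = Real.exp (-σ - σ ^ 2 / 2) := by ring_nf

private lemma I3 {σ : ℝ} (hσ : 0 < σ) (hσ4 : σ ≤ 0.4) :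
    σ ^ 2 / 2 + Real.log (1 + Real.sqrt (Real.exp (σ ^ 2) - 1)) ≤ σ + σ ^ 2 := by
  set s := Real.sqrt (Real.exp (σ ^ 2) - 1) with hsdef
  have h0 : 0 ≤ s := s_nonneg σ
  have h1 : Real.log (1 + s) ≤ s := by
    have := Real.log_le_sub_one_of_pos (by linarith : (0:ℝ) < 1 + s)
    linarith
  have h2 := s_le hσ hσ4
  nlinarith

private lemma I4 {σ : ℝ} (hσ : 0 < σ) (hσ4 : σ ≤ 0.4) :
    -σ - 4.5 * σ ^ 2 ≤ Real.log (1 - Real.sqrt (Real.exp (σ ^ 2) - 1)) := by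
  set s := Real.sqrt (Real.exp (σ ^ 2) - 1) with hsdef
  have h0 : 0 ≤ s := s_nonneg σ
  have h2 := s_le hσ hσ4
  have hs2 : s ≤ 0.464 := by nlinarith
  have h1 : (0:ℝ) < 1 - s := by linarith
  have h3 : Real.log ((1 - s)⁻¹) ≤ (1 - s)⁻¹ - 1 := Real.log_le_sub_one_of_pos (by positivity)
  rw [Real.log_inv] at h3
  have h4 : (1 - s)⁻¹ - 1 = s / (1 - s) := by field_simp; ring
  have h5 : s / (1 - s) ≤ s + 2 * s ^ 2 := by
    rw [div_le_iff₀ h1]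
    nlinarith
  have h6 : s + 2 * s ^ 2 ≤ σ + 4.5 * σ ^ 2 := by
    have e2 : s ^ 2 ≤ (σ + σ ^ 3) ^ 2 := by nlinarith
    have e32 : σ ^ 3 ≤ 0.4 * σ ^ 2 := by nlinarith [sq_nonneg σ]
    have e42 : σ ^ 4 ≤ 0.4 * σ ^ 3 := by nlinarith [pow_nonneg hσ.le 3]
    have e62 : σ ^ 6 ≤ 0.4 * σ ^ 5 := by nlinarith [pow_nonneg hσ.le 5]
    have e52 : σ ^ 5 ≤ 0.4 * σ ^ 4 := by nlinarith [pow_nonneg hσ.le 4]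
    nlinarith [sq_nonneg σ, pow_nonneg hσ.le 3]
  rw [h4] at h3
  linarith



private lemma sqrt_term_eq (μ σ : ℝ) :
    Real.sqrt ((Real.exp (σ ^ 2) - 1) * Real.exp (2 * μ + σ ^ 2))
      = Real.sqrt (Real.exp (σ ^ 2) - 1) * Real.exp (μ + σ ^ 2 / 2) := by
  have h0 : (0:ℝ) ≤ Real.exp (σ ^ 2) - 1 := by
    have := Real.one_le_exp (sq_nonneg σ); linarith
  rw [Real.sqrt_mul h0]
  congr 1
  rw [show Real.exp (2 * μ + σ ^ 2) = Real.exp (μ + σ ^ 2 / 2) * Real.exp (μ + σ ^ 2 / 2) by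
    rw [← Real.exp_add]; ring_nf]
  exact Real.sqrt_mul_self (Real.exp_nonneg _)

private lemma prob_eq (μ σ : ℝ) :
    lognormalVarProb μ σ = ((gaussianReal 0 1)
      {z : ℝ | |Real.exp (μ + σ * z) - Real.exp (μ + σ ^ 2 / 2)| ≤
        Real.sqrt (Real.exp (σ ^ 2) - 1) * Real.exp (μ + σ ^ 2 / 2)}).toReal := by
  unfold lognormalVarProb
  rw [Measure.map_apply (by fun_prop : Measurable fun z : ℝ => Real.exp (μ + σ * z)) (by
    exact measurableSet_le ((measurable_id.sub_const _).abs) measurable_const)]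
  rw [show (fun z : ℝ => Real.exp (μ + σ * z)) ⁻¹'
      {x : ℝ | |x - Real.exp (μ + σ ^ 2 / 2)| ≤
        Real.sqrt ((Real.exp (σ ^ 2) - 1) * Real.exp (2 * μ + σ ^ 2))}
      = {z : ℝ | |Real.exp (μ + σ * z) - Real.exp (μ + σ ^ 2 / 2)| ≤
        Real.sqrt (Real.exp (σ ^ 2) - 1) * Real.exp (μ + σ ^ 2 / 2)} by
    ext z
    simp only [Set.mem_preimage, Set.mem_setOf_eq, sqrt_term_eq]]

private lemma upper_iff {μ σ z : ℝ} (hσ : 0 < σ) :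
    Real.exp (μ + σ * z) ≤ (1 + Real.sqrt (Real.exp (σ ^ 2) - 1)) * Real.exp (μ + σ ^ 2 / 2)
      ↔ z ≤ (σ ^ 2 / 2 + Real.log (1 + Real.sqrt (Real.exp (σ ^ 2) - 1))) / σ := by
  set s := Real.sqrt (Real.exp (σ ^ 2) - 1) with hsdef
  have h2 : (0:ℝ) < 1 + s := by have := s_nonneg σ; linarith
  rw [show (1 + s) * Real.exp (μ + σ ^ 2 / 2) = Real.exp (Real.log (1 + s) + (μ + σ ^ 2 / 2)) from
    (by rw [Real.exp_add, Real.exp_log h2] : Real.exp (Real.log (1 + s) + (μ + σ ^ 2 / 2)) = _).symm]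
  rw [Real.exp_le_exp, le_div_iff₀ hσ]
  constructor <;> intro h <;> nlinarith
private lemma lower_iff {μ σ z : ℝ} (hσ : 0 < σ) (hs : Real.sqrt (Real.exp (σ ^ 2) - 1) < 1) :
    (1 - Real.sqrt (Real.exp (σ ^ 2) - 1)) * Real.exp (μ + σ ^ 2 / 2) ≤ Real.exp (μ + σ * z)
      ↔ (σ ^ 2 / 2 + Real.log (1 - Real.sqrt (Real.exp (σ ^ 2) - 1))) / σ ≤ z := by
  set s := Real.sqrt (Real.exp (σ ^ 2) - 1) with hsdef
  have h2 : (0:ℝ) < 1 - s := by linarith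
  rw [show (1 - s) * Real.exp (μ + σ ^ 2 / 2) = Real.exp (Real.log (1 - s) + (μ + σ ^ 2 / 2)) from
    (by rw [Real.exp_add, Real.exp_log h2] : Real.exp (Real.log (1 - s) + (μ + σ ^ 2 / 2)) = _).symm]
  rw [Real.exp_le_exp, div_le_iff₀ hσ]
  constructor <;> intro h <;> nlinarith

private lemma abs_char {μ σ z : ℝ} :
    (|Real.exp (μ + σ * z) - Real.exp (μ + σ ^ 2 / 2)| ≤
        Real.sqrt (Real.exp (σ ^ 2) - 1) * Real.exp (μ + σ ^ 2 / 2))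
    ↔ ((1 - Real.sqrt (Real.exp (σ ^ 2) - 1)) * Real.exp (μ + σ ^ 2 / 2) ≤ Real.exp (μ + σ * z)
      ∧ Real.exp (μ + σ * z) ≤
        (1 + Real.sqrt (Real.exp (σ ^ 2) - 1)) * Real.exp (μ + σ ^ 2 / 2)) := by
  rw [abs_le]
  constructor <;> rintro ⟨h1, h2⟩ <;> constructor <;> nlinarith

private lemma gauss_le_volume (T : Set ℝ) : gaussianReal 0 1 T ≤ volume T := by
  rw [gaussianReal_apply 0 one_ne_zero T]
  calc ∫⁻ x in T, gaussianPDF 0 1 x ≤ ∫⁻ _ in T, 1 := by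
        refine lintegral_mono fun x => ?_
        have hle : gaussianPDFReal 0 1 x ≤ 1 := by
          rw [gaussianPDFReal]
          have h1 : (1:ℝ) ≤ Real.sqrt (2 * π * (1:ℝ≥0)) := by
            rw [show ((1:ℝ≥0):ℝ) = 1 by norm_num, mul_one]
            rw [show (1:ℝ) = Real.sqrt 1 by simp]
            exact Real.sqrt_le_sqrt (by nlinarith [Real.pi_gt_three])
          have h2 : Real.exp (-(x - 0) ^ 2 / (2 * (1:ℝ≥0))) ≤ 1 := by
            rw [show (1:ℝ) = Real.exp 0 by simp]
            apply Real.exp_le_exp.2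
            have : (0:ℝ) ≤ (x - 0) ^ 2 := sq_nonneg _
            have h3 : (0:ℝ) < 2 * (1:ℝ≥0) := by norm_num
            apply div_nonpos_of_nonpos_of_nonneg <;> [linarith; linarith]
          calc (Real.sqrt (2 * π * (1:ℝ≥0)))⁻¹ * Real.exp (-(x - 0) ^ 2 / (2 * (1:ℝ≥0)))
              ≤ 1 * 1 := by
                apply mul_le_mul _ h2 (Real.exp_nonneg _) zero_le_one
                rw [inv_le_one_iff₀]; right; exact h1
            _ = 1 := by norm_num
        calc gaussianPDF 0 1 x = ENNReal.ofReal (gaussianPDFReal 0 1 x) := rfl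
        _ ≤ ENNReal.ofReal 1 := ENNReal.ofReal_le_ofReal hle
        _ = 1 := ENNReal.ofReal_one
  _ = volume T := by rw [setLIntegral_one]

private lemma absset_eq : {z : ℝ | |z| ≤ 1} = Icc (-1:ℝ) 1 := by
  ext z; simp [abs_le]

private lemma part1 (μ σ : ℝ) (hσ : 0 < σ) :
    ((gaussianReal 0 1) {z : ℝ | |z| ≤ 1}).toReal < lognormalVarProb μ σ := by
  rw [prob_eq μ σ, absset_eq]
  set s := Real.sqrt (Real.exp (σ ^ 2) - 1) with hsdef
  set A := (σ ^ 2 / 2 + Real.log (1 + s)) / σ with hA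
  have h1A : 1 < A := by
    rw [hA, lt_div_iff₀ hσ, one_mul]; exact I1 hσ
  set T := {z : ℝ | |Real.exp (μ + σ * z) - Real.exp (μ + σ ^ 2 / 2)| ≤
    s * Real.exp (μ + σ ^ 2 / 2)} with hT
  have hsub : Icc (-1:ℝ) A ⊆ T := by
    intro z hz
    rw [Set.mem_Icc] at hz
    rw [hT, Set.mem_setOf_eq, abs_char]
    constructor
    · by_cases hs1 : s < 1
      · rw [lower_iff hσ hs1]
        have hB : (σ ^ 2 / 2 + Real.log (1 - s)) / σ ≤ -1 := by
          rw [div_le_iff₀ hσ]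
          have := I2 hσ hs1
          nlinarith
        linarith [hz.1]
      · push_neg at hs1
        have h0 : (1 - s) * Real.exp (μ + σ ^ 2 / 2) ≤ 0 :=
          mul_nonpos_of_nonpos_of_nonneg (by linarith) (Real.exp_nonneg _)
        linarith [Real.exp_pos (μ + σ * z)]
    · rw [upper_iff hσ]; exact hz.2
  have hm : gaussianReal 0 1 (Icc (-1:ℝ) 1) < gaussianReal 0 1 T := by
    have hne : gaussianReal 0 1 (Ioc (1:ℝ) A) ≠ 0 := by
      intro h0
      have hac := gaussianReal_absolutelyContinuous' 0 one_ne_zero h0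
      rw [Real.volume_Ioc] at hac
      rw [ENNReal.ofReal_eq_zero] at hac
      linarith
    calc gaussianReal 0 1 (Icc (-1:ℝ) 1)
        < gaussianReal 0 1 (Icc (-1:ℝ) 1) + gaussianReal 0 1 (Ioc (1:ℝ) A) :=
          ENNReal.lt_add_right (measure_ne_top _ _) hne
      _ = gaussianReal 0 1 (Icc (-1:ℝ) A) := by
          rw [← measure_union (by
            rw [Set.disjoint_left]
            rintro z hz1 hz2
            exact absurd hz1.2 (not_le.2 hz2.1)) measurableSet_Ioc,
            Set.Icc_union_Ioc_eq_Icc (by norm_num) h1A.le]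
      _ ≤ gaussianReal 0 1 T := measure_mono hsub
  exact (ENNReal.toReal_lt_toReal (measure_ne_top _ _) (measure_ne_top _ _)).2 hm

private lemma part2 (σ : ℝ) (hσ : 0 < σ) (hσ4 : σ ≤ 0.4) :
    lognormalVarProb 0 σ ≤ ((gaussianReal 0 1) {z : ℝ | |z| ≤ 1}).toReal + 5 * σ := by
  rw [prob_eq 0 σ, absset_eq]
  set s := Real.sqrt (Real.exp (σ ^ 2) - 1) with hsdef
  set A := (σ ^ 2 / 2 + Real.log (1 + s)) / σ with hA
  set B := (σ ^ 2 / 2 + Real.log (1 - s)) / σ with hB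
  have hs_le : s ≤ σ + σ ^ 3 := s_le hσ hσ4
  have hs1 : s < 1 := by nlinarith [s_nonneg σ]
  have hBle : B ≤ -1 := by
    rw [hB, div_le_iff₀ hσ]
    have := I2 hσ hs1
    nlinarith
  have h1A : (1:ℝ) ≤ A := by
    rw [hA, le_div_iff₀ hσ, one_mul]; exact (I1 hσ).le
  have hAle : A ≤ 1 + σ := by
    rw [hA, div_le_iff₀ hσ]
    have := I3 hσ hσ4
    nlinarith
  have hBge : -1 - 4 * σ ≤ B := by
    rw [hB, le_div_iff₀ hσ]
    have := I4 hσ hσ4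
    nlinarith
  set T := {z : ℝ | |Real.exp (0 + σ * z) - Real.exp (0 + σ ^ 2 / 2)| ≤
    s * Real.exp (0 + σ ^ 2 / 2)} with hT
  have hsub : T ⊆ Icc B A := by
    intro z hz
    rw [hT, Set.mem_setOf_eq, abs_char] at hz
    exact ⟨(lower_iff hσ hs1).1 hz.1, (upper_iff hσ).1 hz.2⟩
  have hsplit : Icc B A ⊆ Ico B (-1) ∪ (Icc (-1:ℝ) 1 ∪ Ioc (1:ℝ) A) := by
    intro z hz
    rcases lt_or_ge z (-1) with h | h
    · exact Or.inl ⟨hz.1, h⟩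
    · rcases le_or_gt z 1 with h2 | h2
      · exact Or.inr (Or.inl ⟨h, h2⟩)
      · exact Or.inr (Or.inr ⟨h2, hz.2⟩)
  have hb1 : gaussianReal 0 1 (Ico B (-1)) ≤ ENNReal.ofReal (4 * σ) := by
    refine (gauss_le_volume _).trans ?_
    rw [Real.volume_Ico]
    exact ENNReal.ofReal_le_ofReal (by linarith)
  have hb2 : gaussianReal 0 1 (Ioc (1:ℝ) A) ≤ ENNReal.ofReal σ := by
    refine (gauss_le_volume _).trans ?_
    rw [Real.volume_Ioc]
    exact ENNReal.ofReal_le_ofReal (by linarith)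
  have hmain : gaussianReal 0 1 T ≤
      gaussianReal 0 1 (Icc (-1:ℝ) 1) + ENNReal.ofReal (4 * σ) + ENNReal.ofReal σ := by
    calc gaussianReal 0 1 T
        ≤ gaussianReal 0 1 (Ico B (-1) ∪ (Icc (-1:ℝ) 1 ∪ Ioc (1:ℝ) A)) :=
          measure_mono (hsub.trans hsplit)
      _ ≤ gaussianReal 0 1 (Ico B (-1)) +
          (gaussianReal 0 1 (Icc (-1:ℝ) 1) + gaussianReal 0 1 (Ioc (1:ℝ) A)) :=
          (measure_union_le _ _).trans (by gcongr; exact measure_union_le _ _)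
      _ ≤ ENNReal.ofReal (4 * σ) +
          (gaussianReal 0 1 (Icc (-1:ℝ) 1) + ENNReal.ofReal σ) := by gcongr
      _ = gaussianReal 0 1 (Icc (-1:ℝ) 1) + ENNReal.ofReal (4 * σ) + ENNReal.ofReal σ := by
          ring
  have hfin : gaussianReal 0 1 (Icc (-1:ℝ) 1) + ENNReal.ofReal (4 * σ) + ENNReal.ofReal σ ≠ ⊤ :=
    ENNReal.add_ne_top.2 ⟨ENNReal.add_ne_top.2 ⟨measure_ne_top _ _, ENNReal.ofReal_ne_top⟩,
      ENNReal.ofReal_ne_top⟩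
  calc (gaussianReal 0 1 T).toReal
      ≤ (gaussianReal 0 1 (Icc (-1:ℝ) 1) + ENNReal.ofReal (4 * σ) + ENNReal.ofReal σ).toReal :=
        ENNReal.toReal_mono hfin hmain
    _ = (gaussianReal 0 1 (Icc (-1:ℝ) 1)).toReal + (4 * σ) + σ := by
        rw [ENNReal.toReal_add (ENNReal.add_ne_top.2 ⟨measure_ne_top _ _,
          ENNReal.ofReal_ne_top⟩) ENNReal.ofReal_ne_top,
          ENNReal.toReal_add (measure_ne_top _ _) ENNReal.ofReal_ne_top,
          ENNReal.toReal_ofReal (by linarith), ENNReal.toReal_ofReal hσ.le]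
    _ ≤ (gaussianReal 0 1 (Icc (-1:ℝ) 1)).toReal + 5 * σ := by linarith

theorem lognormal_variation_comparison :
    (∀ (μ σ : ℝ), 0 < σ →
      ((gaussianReal 0 1) {z : ℝ | |z| ≤ 1}).toReal < lognormalVarProb μ σ)
    ∧ sInf {p : ℝ | ∃ (μ σ : ℝ), 0 < σ ∧ p = lognormalVarProb μ σ}
        = ((gaussianReal 0 1) {z : ℝ | |z| ≤ 1}).toReal := by
  refine ⟨fun μ σ hσ => part1 μ σ hσ, ?_⟩
  set c := ((gaussianReal 0 1) {z : ℝ | |z| ≤ 1}).toReal with hc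
  set S := {p : ℝ | ∃ (μ σ : ℝ), 0 < σ ∧ p = lognormalVarProb μ σ} with hS
  have hbdd : BddBelow S := by
    refine ⟨c, ?_⟩
    rintro p ⟨μ, σ, hσ, rfl⟩
    exact (part1 μ σ hσ).le
  have hne : S.Nonempty := ⟨lognormalVarProb 0 1, 0, 1, one_pos, rfl⟩
  refine le_antisymm ?_ ?_
  · refine le_of_forall_pos_le_add fun ε hε => ?_
    set σ0 := min (ε / 5) 0.4 with hσ0def
    have hσ0 : 0 < σ0 := lt_min (by positivity) (by norm_num)
    have hσ04 : σ0 ≤ 0.4 := min_le_right _ _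
    have h5 : 5 * σ0 ≤ ε := by
      have := min_le_left (ε / 5) 0.4
      nlinarith
    calc sInf S ≤ lognormalVarProb 0 σ0 := csInf_le hbdd ⟨0, σ0, hσ0, rfl⟩
      _ ≤ c + 5 * σ0 := part2 σ0 hσ0 hσ04
      _ ≤ c + ε := by linarith
  · refine le_csInf hne ?_
    rintro p ⟨μ, σ, hσ, rfl⟩
    exact (part1 μ σ hσ).le
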